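/- arXiv:1304.4373 — 5 statements merged into one kernel-verified Lean document; each statement's English description precedes it below -/
import Mathlib

section
/- Let n, m be positive integers, A an m×n real matrix, b ∈ ℝ^m, γ > 0 and p ≥ 1. Then the inverse Potts functional P_γ(x) = γ‖∇x‖₀ + ‖Ax − b‖_p^p attains its infimum over ℝ^n, i.e., there exists x* ∈ ℝ^n with P_γ(x*) ≤ P_γ(x) for all x ∈ ℝ^n. -/
open scoped BigOperators

noncomputable section

/-- The jump set of a signal `x ∈ ℝⁿ`: the indices `i` with `x i ≠ x (i+1)`. -/
def jumpSet {n : ℕ} (x : Fin n → ℝ) : Set (Fin n) :=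
  {i | ∃ h : (i : ℕ) + 1 < n, x i ≠ x ⟨(i : ℕ) + 1, h⟩}

/-- `‖∇x‖₀`: the number of jumps of `x`. -/
def nJumps {n : ℕ} (x : Fin n → ℝ) : ℕ := (jumpSet x).ncard

/-- Piecewise-constant signals whose jumps lie in `S`. -/
def pcSubmodule (n : ℕ) (S : Finset (Fin n)) : Submodule ℝ (Fin n → ℝ) where
  carrier := {x | ∀ i : Fin n, ∀ h : (i : ℕ) + 1 < n, i ∉ S → x i = x ⟨(i : ℕ) + 1, h⟩}
  add_mem' := by
    intro a c ha hc i h hi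
    simp [ha i h hi, hc i h hi]
  zero_mem' := by
    intro i h hi
    rfl
  smul_mem' := by
    intro c a ha i h hi
    simp [ha i h hi]

lemma mem_pcSubmodule_iff {n : ℕ} {S : Finset (Fin n)} {x : Fin n → ℝ} :
    x ∈ pcSubmodule n S ↔ jumpSet x ⊆ (S : Set (Fin n)) := by
  constructor
  · intro hx i hi
    obtain ⟨h, hne⟩ := hi
    by_contra hS
    exact hne (hx i h hS)
  · intro hsub i h hiS
    by_contra hne
    exact hiS (hsub ⟨h, hne⟩)

lemma abs_le_rpow_add_one {t p : ℝ} (hp : 1 ≤ p) : |t| ≤ |t| ^ p + 1 := by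
  rcases le_or_gt (|t|) 1 with h | h
  · have : (0:ℝ) ≤ |t| ^ p := Real.rpow_nonneg (abs_nonneg t) p
    linarith
  · have h1 : (1:ℝ) ≤ |t| := h.le
    have : |t| ^ (1:ℝ) ≤ |t| ^ p := Real.rpow_le_rpow_of_exponent_le h1 hp
    rw [Real.rpow_one] at this
    have : (0:ℝ) ≤ 1 := zero_le_one
    nlinarith [Real.rpow_le_rpow_of_exponent_le h1 hp, Real.rpow_one |t|]

/-- Minimizing `‖y - b‖_p^p` over a submodule of `ℝ^m`. -/
lemma exists_min_on_submodule (m : ℕ) (b : Fin m → ℝ) (p : ℝ) (hp : 1 ≤ p)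
    (W : Submodule ℝ (Fin m → ℝ)) :
    ∃ y ∈ W, ∀ z ∈ W, ∑ i, |y i - b i| ^ p ≤ ∑ i, |z i - b i| ^ p := by
  set g : W → ℝ := fun y => ∑ i, |(y : Fin m → ℝ) i - b i| ^ p with hg
  have hcont : Continuous g := by
    apply continuous_finset_sum
    intro i _
    have h1 : Continuous fun y : W => |(y : Fin m → ℝ) i - b i| :=
      (((continuous_apply i).comp continuous_subtype_val).sub continuous_const).abs
    exact h1.rpow_const (fun x => Or.inr (le_trans zero_le_one hp))
  have hbound : ∀ y : W, ‖y‖ - ‖b‖ - m ≤ g y := by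
    intro y
    have h1 : ‖(y : Fin m → ℝ) - b‖ ≤ ∑ i, |(y : Fin m → ℝ) i - b i| := by
      have hnn : (0:ℝ) ≤ ∑ i, |(y : Fin m → ℝ) i - b i| :=
        Finset.sum_nonneg fun i _ => abs_nonneg _
      rw [pi_norm_le_iff_of_nonneg hnn]
      intro i
      calc ‖((y : Fin m → ℝ) - b) i‖ = |(y : Fin m → ℝ) i - b i| := by simp [Real.norm_eq_abs]
        _ ≤ ∑ j, |(y : Fin m → ℝ) j - b j| :=
          Finset.single_le_sum (f := fun j => |(y : Fin m → ℝ) j - b j|)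
            (fun j _ => abs_nonneg _) (Finset.mem_univ i)
    have h2 : ∑ i, |(y : Fin m → ℝ) i - b i| ≤ g y + m := by
      have : ∑ i, |(y : Fin m → ℝ) i - b i| ≤ ∑ i, (|(y : Fin m → ℝ) i - b i| ^ p + 1) :=
        Finset.sum_le_sum fun i _ => abs_le_rpow_add_one hp
      simpa [Finset.sum_add_distrib, hg] using this
    have h3 : ‖y‖ ≤ ‖(y : Fin m → ℝ) - b‖ + ‖b‖ := by
      have := norm_sub_norm_le ((y : Fin m → ℝ)) b
      have hy : ‖y‖ = ‖(y : Fin m → ℝ)‖ := rfl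
      linarith [norm_sub_norm_le ((y : Fin m → ℝ)) b]
    linarith
  have hcoer : Filter.Tendsto g (Filter.cocompact W) Filter.atTop := by
    have hn : Filter.Tendsto (fun y : W => ‖y‖ - ‖b‖ - (m:ℝ)) (Filter.cocompact W)
        Filter.atTop := by
      apply Filter.tendsto_atTop_add_const_right
      apply Filter.tendsto_atTop_add_const_right
      exact tendsto_norm_cocompact_atTop
    exact Filter.tendsto_atTop_mono hbound hn
  obtain ⟨y, hy⟩ := hcont.exists_forall_le hcoer
  exact ⟨(y : Fin m → ℝ), y.2, fun z hz => hy ⟨z, hz⟩⟩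

/-- Minimizing the data term over signals with jump set inside `S`. -/
lemma exists_min_pc (n m : ℕ) (A : Matrix (Fin m) (Fin n) ℝ) (b : Fin m → ℝ)
    (p : ℝ) (hp : 1 ≤ p) (S : Finset (Fin n)) :
    ∃ x ∈ pcSubmodule n S, ∀ z ∈ pcSubmodule n S,
      ∑ i, |(A.mulVec x - b) i| ^ p ≤ ∑ i, |(A.mulVec z - b) i| ^ p := by
  obtain ⟨y, hyW, hymin⟩ := exists_min_on_submodule m b p hp
    ((pcSubmodule n S).map A.mulVecLin)
  obtain ⟨x, hx, hAx⟩ := hyW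
  refine ⟨x, hx, fun z hz => ?_⟩
  have hAz : A.mulVecLin z ∈ (pcSubmodule n S).map A.mulVecLin :=
    Submodule.mem_map_of_mem hz
  have hAx' : A.mulVec x = y := by simpa [Matrix.mulVecLin_apply] using hAx
  have := hymin (A.mulVecLin z) hAz
  rw [hAx']
  simpa [Matrix.mulVecLin_apply] using this

/-- The inverse Potts functional `P_γ(x) = γ‖∇x‖₀ + ‖Ax − b‖_p^p` attains its
infimum over `ℝⁿ`. -/
theorem inverse_potts_has_minimizer (n m : ℕ) (hn : 0 < n) (hm : 0 < m)
    (A : Matrix (Fin m) (Fin n) ℝ) (b : Fin m → ℝ) (γ p : ℝ)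
    (hγ : 0 < γ) (hp : 1 ≤ p) :
    ∃ xstar : Fin n → ℝ, ∀ x : Fin n → ℝ,
      γ * (nJumps xstar : ℝ) + ∑ i, |(A.mulVec xstar - b) i| ^ p ≤
        γ * (nJumps x : ℝ) + ∑ i, |(A.mulVec x - b) i| ^ p := by
  classical
  -- candidate minimizer for each jump pattern S
  have hmin := fun S : Finset (Fin n) => exists_min_pc n m A b p hp S
  choose xmin hxmem hxmin using hmin
  set F : Finset (Fin n) → ℝ :=
    fun S => γ * S.card + ∑ i, |(A.mulVec (xmin S) - b) i| ^ p with hF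
  obtain ⟨S, -, hSmin⟩ := Finset.exists_min_image (Finset.univ : Finset (Finset (Fin n)))
    F ⟨∅, Finset.mem_univ ∅⟩
  refine ⟨xmin S, fun x => ?_⟩
  -- the jump pattern of x
  set S' : Finset (Fin n) := (jumpSet x).toFinset with hS'
  have hxS' : x ∈ pcSubmodule n S' := by
    rw [mem_pcSubmodule_iff]
    simp [hS', Set.subset_toFinset]
  have hdata : ∑ i, |(A.mulVec (xmin S') - b) i| ^ p ≤ ∑ i, |(A.mulVec x - b) i| ^ p :=
    hxmin S' x hxS'
  have hcard : (nJumps x : ℝ) = (S'.card : ℝ) := by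
    simp [nJumps, hS', Set.ncard_eq_toFinset_card']
  have hstar : (nJumps (xmin S) : ℝ) ≤ (S.card : ℝ) := by
    have hsub : jumpSet (xmin S) ⊆ (S : Set (Fin n)) :=
      mem_pcSubmodule_iff.mp (hxmem S)
    have := Set.ncard_le_ncard hsub (Set.toFinite _)
    rw [Set.ncard_coe_finset] at this
    exact_mod_cast this
  have h1 : γ * (nJumps (xmin S) : ℝ) + ∑ i, |(A.mulVec (xmin S) - b) i| ^ p ≤ F S := by
    have := mul_le_mul_of_nonneg_left hstar hγ.le
    simp only [hF]
    linarith
  have h2 : F S ≤ F S' := hSmin S' (Finset.mem_univ S')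
  have h3 : F S' ≤ γ * (nJumps x : ℝ) + ∑ i, |(A.mulVec x - b) i| ^ p := by
    simp only [hF]
    rw [hcard]
    linarith
  linarith
end
end

section
/- Let L : ℝ^n → ℝ^m be a linear map and k ∈ ℕ. Then the image L(M_k) = {Lx : x ∈ ℝ^n, ‖∇x‖₀ ≤ k} is a closed subset of ℝ^m. Consequently, the function s(b) = min{‖∇x‖₀ : Lx = b}, defined on the range of L, is lower semicontinuous (the preimage of {0,…,k} under s is closed in the range of L for every k). -/
open scoped BigOperators

noncomputable section

/-- The subspace of signals whose jump set is contained in `S`. -/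
def jumpSubspace {n : ℕ} (S : Finset (Fin n)) : Submodule ℝ (Fin n → ℝ) where
  carrier := {x | ∀ i : Fin n, ∀ h : (i : ℕ) + 1 < n, i ∉ S → x i = x ⟨(i : ℕ) + 1, h⟩}
  add_mem' := by
    intro a b ha hb i h hi
    simp [ha i h hi, hb i h hi]
  zero_mem' := by intro i h hi; simp
  smul_mem' := by
    intro c a ha i h hi
    simp [ha i h hi]

lemma mem_jumpSubspace_iff {n : ℕ} (S : Finset (Fin n)) (x : Fin n → ℝ) :
    x ∈ jumpSubspace S ↔ jumpSet x ⊆ (S : Set (Fin n)) := by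
  constructor
  · intro hx i hi
    obtain ⟨h, hne⟩ := hi
    by_contra hiS
    exact hne (hx i h hiS)
  · intro hsub i h hiS
    by_contra hne
    exact hiS (hsub ⟨h, hne⟩)

lemma image_Mk_closed (n m k : ℕ) (L : (Fin n → ℝ) →ₗ[ℝ] (Fin m → ℝ)) :
    IsClosed (L '' {x : Fin n → ℝ | nJumps x ≤ k}) := by
  have hEq : L '' {x : Fin n → ℝ | nJumps x ≤ k} =
      ⋃ S : {S : Finset (Fin n) // S.card ≤ k},
        ((jumpSubspace S.1).map L : Set (Fin m → ℝ)) := by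
    ext b
    simp only [Set.mem_image, Set.mem_iUnion, SetLike.mem_coe, Submodule.mem_map]
    constructor
    · rintro ⟨x, hx, rfl⟩
      have hfin : (jumpSet x).Finite := Set.toFinite _
      refine ⟨⟨hfin.toFinset, ?_⟩, x, ?_, rfl⟩
      · rwa [← Set.ncard_eq_toFinset_card (jumpSet x) hfin]
      · rw [mem_jumpSubspace_iff, Set.Finite.coe_toFinset]
    · rintro ⟨⟨S, hS⟩, x, hx, rfl⟩
      refine ⟨x, ?_, rfl⟩
      have := (mem_jumpSubspace_iff S x).mp hx
      calc nJumps x = (jumpSet x).ncard := rfl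
        _ ≤ (S : Set (Fin n)).ncard := Set.ncard_le_ncard this (Set.toFinite _)
        _ = S.card := by simp [Set.ncard_coe_finset]
        _ ≤ k := hS
  rw [hEq]
  exact isClosed_iUnion_of_finite fun S => ((jumpSubspace S.1).map L).closed_of_finiteDimensional

/-- The image of `M_k = {x : ‖∇x‖₀ ≤ k}` under a linear map `L` is closed;
consequently the map `s(b) = min {‖∇x‖₀ : Lx = b}` on the range of `L` is lower
semicontinuous: the preimage of `{0,…,k'}` under `s` is closed in the range of
`L` for every `k'`. -/
theorem image_Mk_closed_and_s_lsc (n m k : ℕ)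
    (L : (Fin n → ℝ) →ₗ[ℝ] (Fin m → ℝ)) :
    IsClosed (L '' {x : Fin n → ℝ | nJumps x ≤ k}) ∧
    ∀ k' : ℕ,
      IsClosed {b : Set.range L |
        sInf {j : ℕ | ∃ x : Fin n → ℝ, L x = (b : Fin m → ℝ) ∧ nJumps x = j} ≤ k'} := by
  refine ⟨image_Mk_closed n m k L, fun k' => ?_⟩
  have hset : {b : Set.range L |
      sInf {j : ℕ | ∃ x : Fin n → ℝ, L x = (b : Fin m → ℝ) ∧ nJumps x = j} ≤ k'} =
      (Subtype.val) ⁻¹' (L '' {x : Fin n → ℝ | nJumps x ≤ k'}) := by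
    ext ⟨b, hb⟩
    obtain ⟨x₀, hx₀⟩ := hb
    have hne : {j : ℕ | ∃ x : Fin n → ℝ, L x = b ∧ nJumps x = j}.Nonempty :=
      ⟨nJumps x₀, x₀, hx₀, rfl⟩
    simp only [Set.mem_setOf_eq, Set.mem_preimage, Set.mem_image]
    constructor
    · intro h
      obtain ⟨x, hx, hj⟩ := Nat.sInf_mem hne
      exact ⟨x, by rw [hj]; exact h, hx⟩
    · rintro ⟨x, hx, hLx⟩
      exact le_trans (Nat.sInf_le ⟨x, hLx, rfl⟩) hx
  rw [hset]
  exact (image_Mk_closed n m k' L).preimage continuous_subtype_val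
end
end

section
/- Let A be an m×n real matrix and b ∈ ℝ^m, let e = (1,…,1)ᵀ ∈ ℝ^n, let Ã_i = ∑_{j=1}^n A_{ij}, and assume ∑_{i=1}^m Ã_i² ≠ 0. Define μ(x₀) = (∑_i Ã_i b_i − ∑_i Ã_i ∑_j A_{ij} x_{0,j}) / (∑_i Ã_i²), the matrix A′ with entries A′_{kj} = A_{kj} − Ã_k (∑_{i=1}^m Ã_i A_{ij}) / (∑_{i=1}^m Ã_i²), and the vector b′ with entries b′_k = b_k − Ã_k (∑_{i=1}^m Ã_i b_i) / (∑_{i=1}^m Ã_i²). Then for every x₀ ∈ ℝ^n, ‖A x₀ + μ(x₀) A e − b‖₂² = ‖A′ x₀ − b′‖₂². -/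
open scoped BigOperators

noncomputable section

/-- The row sums `Ã_i = ∑_j A_{ij}` of a matrix. -/
def rowSum {m n : ℕ} (A : Matrix (Fin m) (Fin n) ℝ) (i : Fin m) : ℝ := ∑ j, A i j

/-- `μ(x₀) = (∑ᵢ Ãᵢ bᵢ − ∑ᵢ Ãᵢ ∑ⱼ A_{ij} x₀ⱼ) / ∑ᵢ Ãᵢ²`. -/
def muOf {m n : ℕ} (A : Matrix (Fin m) (Fin n) ℝ) (b : Fin m → ℝ)
    (x₀ : Fin n → ℝ) : ℝ :=
  (∑ i, rowSum A i * b i - ∑ i, rowSum A i * (∑ j, A i j * x₀ j)) /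
    ∑ i, (rowSum A i) ^ 2

/-- The matrix `A′` with `A′_{kj} = A_{kj} − Ã_k (∑ᵢ Ãᵢ A_{ij}) / ∑ᵢ Ãᵢ²`. -/
def Aprime {m n : ℕ} (A : Matrix (Fin m) (Fin n) ℝ) : Matrix (Fin m) (Fin n) ℝ :=
  Matrix.of fun k j =>
    A k j - rowSum A k * (∑ i, rowSum A i * A i j) / ∑ i, (rowSum A i) ^ 2

/-- The vector `b′` with `b′_k = b_k − Ã_k (∑ᵢ Ãᵢ bᵢ) / ∑ᵢ Ãᵢ²`. -/
def bprime {m n : ℕ} (A : Matrix (Fin m) (Fin n) ℝ) (b : Fin m → ℝ) :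
    Fin m → ℝ :=
  fun k => b k - rowSum A k * (∑ i, rowSum A i * b i) / ∑ i, (rowSum A i) ^ 2

/-- The constant-one vector `e ∈ ℝⁿ`. -/
def ones (n : ℕ) : Fin n → ℝ := fun _ => 1

/-- If `∑ᵢ Ãᵢ² ≠ 0`, then for every `x₀`,
`‖A x₀ + μ(x₀)·Ae − b‖₂² = ‖A′ x₀ − b′‖₂²`. -/
theorem plugged_in_mu_eq_reduced_problem (m n : ℕ)
    (A : Matrix (Fin m) (Fin n) ℝ) (b : Fin m → ℝ)
    (hA : ∑ i, (rowSum A i) ^ 2 ≠ 0) :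
    ∀ x₀ : Fin n → ℝ,
      ∑ i, (A.mulVec x₀ i + muOf A b x₀ * A.mulVec (ones n) i - b i) ^ 2 =
        ∑ i, ((Aprime A).mulVec x₀ i - bprime A b i) ^ 2 := by
  intro x₀
  apply Finset.sum_congr rfl
  intro k _
  congr 1
  have hswap : ∑ j, (∑ i, rowSum A i * A i j) * x₀ j
      = ∑ i, rowSum A i * (∑ j, A i j * x₀ j) := by
    simp only [Finset.sum_mul, Finset.mul_sum]
    rw [Finset.sum_comm]
    exact Finset.sum_congr rfl fun i _ => Finset.sum_congr rfl fun j _ => by ring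
  simp only [Matrix.mulVec, dotProduct, muOf, Aprime, bprime, ones,
    Matrix.of_apply, mul_one, sub_mul, Finset.sum_sub_distrib]
  rw [show ∑ j, rowSum A k * (∑ i, rowSum A i * A i j) / (∑ i, (rowSum A i) ^ 2) * x₀ j
      = rowSum A k * (∑ i, rowSum A i * (∑ j, A i j * x₀ j)) / (∑ i, (rowSum A i) ^ 2) by
    rw [← hswap, Finset.mul_sum, Finset.sum_div]
    apply Finset.sum_congr rfl; intro j _; ring]
  have : ∑ j, A k j = rowSum A k := rfl
  rw [this]
  field_simp
  ring
end
end

section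
/- Let n ≥ 2, let A be an m×n real matrix, b ∈ ℝ^m, γ > 0, let e = (1,…,1)ᵀ ∈ ℝ^n, Ã_i = ∑_{j=1}^n A_{ij}, and assume ∑_{i=1}^m Ã_i² ≠ 0. Let V = {x ∈ ℝ^n : ∑_i x_i = 0}, let ∇⁺ : ℝ^{n−1} → V be the inverse of the finite difference operator ∇ restricted to V, and define μ(x₀) = (∑_i Ã_i b_i − ∑_i Ã_i ∑_j A_{ij} x_{0,j}) / (∑_i Ã_i²), A′_{kj} = A_{kj} − Ã_k (∑_i Ã_i A_{ij}) / (∑_i Ã_i²), and b′_k = b_k − Ã_k (∑_i Ã_i b_i) / (∑_i Ã_i²). If u* ∈ ℝ^{n−1} minimizes u ↦ γ‖u‖₀ + ‖A′∇⁺u − b′‖₂² over ℝ^{n−1}, then x* = ∇⁺u* + μ(∇⁺u*)·e minimizes the inverse Potts functional P_γ(x) = γ‖∇x‖₀ + ‖Ax − b‖₂² over ℝ^n. -/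
open scoped BigOperators

noncomputable section

/-- `‖u‖₀`: the number of nonzero entries of `u`. -/
def l0 {n : ℕ} (u : Fin n → ℝ) : ℕ := Set.ncard {i | u i ≠ 0}

/-- The finite difference operator `∇ : ℝⁿ → ℝ^{n−1}`, `(∇x)_i = x_{i+1} − x_i`. -/
def diffOp {n : ℕ} (x : Fin n → ℝ) : Fin (n - 1) → ℝ :=
  fun i => x ⟨(i : ℕ) + 1, by have := i.isLt; omega⟩ - x ⟨(i : ℕ), by have := i.isLt; omega⟩

/-!
Every `x` splits as `x = ∇⁺(∇x) + c·e`, and shifting by a multiple of `e` changes neither the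
jumps nor the part of the residual `Ax − b` orthogonal to `Ã = Ae`. By Pythagoras,
`‖A(w + c·e) − b‖² = ‖A′w − b′‖² + ‖Ã‖² (c − μ(w))²`, so `P_γ(∇⁺u + c·e)` is the sparsity
functional at `u` plus a nonnegative term that vanishes at `c = μ(∇⁺u)`.
-/

lemma diffOp_add_smul_ones {n : ℕ} (x : Fin n → ℝ) (c : ℝ) :
    diffOp (x + c • ones n) = diffOp x := by
  funext i
  simp [diffOp, ones]

lemma nJumps_eq_l0_diffOp {n : ℕ} (x : Fin n → ℝ) : nJumps x = l0 (diffOp x) := by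
  let emb : Fin (n - 1) → Fin n := Fin.castLE (Nat.sub_le n 1)
  have hjump : jumpSet x = emb '' {i | diffOp x i ≠ 0} := by
    ext ⟨i, hi⟩
    simp only [jumpSet, diffOp, Set.mem_ofPred_eq, Set.mem_image, ne_eq, sub_eq_zero]
    constructor
    · rintro ⟨h, hne⟩
      exact ⟨⟨i, by omega⟩, Ne.symm hne, rfl⟩
    · rintro ⟨⟨j, hj⟩, hne, hji⟩
      obtain rfl : j = i := congrArg Fin.val hji
      exact ⟨by omega, Ne.symm hne⟩
  rw [nJumps, l0, hjump, Set.ncard_image_of_injective _ (Fin.castLE_injective _)]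

lemma exists_eq_add_smul_ones_of_diffOp_eq {n : ℕ} {x y : Fin n → ℝ}
    (h : diffOp x = diffOp y) : ∃ c : ℝ, x = y + c • ones n := by
  rcases Nat.eq_zero_or_pos n with rfl | hn
  · exact ⟨0, funext fun i => i.elim0⟩
  refine ⟨x ⟨0, hn⟩ - y ⟨0, hn⟩, funext fun ⟨k, hk⟩ => ?_⟩
  simp only [Pi.add_apply, Pi.smul_apply, ones, smul_eq_mul, mul_one]
  induction k with
  | zero => ring
  | succ k ih =>
    have hstep := congrFun h ⟨k, by omega⟩
    simp only [diffOp] at hstep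
    linarith [ih (by omega)]

section Projection

variable {m : ℕ} (β q : Fin m → ℝ)

lemma sum_sq_add_mul (a : ℝ) :
    ∑ k, (q k + a * β k) ^ 2 =
      ∑ k, q k ^ 2 + 2 * a * ∑ k, β k * q k + a ^ 2 * ∑ k, β k ^ 2 := by
  simp only [Finset.mul_sum, ← Finset.sum_add_distrib]
  exact Finset.sum_congr rfl fun k _ => by ring

/-- With Lean's `x / 0 = 0` this also holds for `β = 0`. -/
lemma sum_sq_add_mul_eq_proj (c : ℝ) :
    ∑ k, (q k + c * β k) ^ 2 =
      ∑ k, (q k - (∑ i, β i * q i) / (∑ i, β i ^ 2) * β k) ^ 2 +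
        (∑ i, β i ^ 2) * (c + (∑ i, β i * q i) / (∑ i, β i ^ 2)) ^ 2 := by
  simp only [sub_eq_add_neg, ← neg_mul, sum_sq_add_mul]
  by_cases hs : ∑ i, β i ^ 2 = 0
  · have hβ : ∀ i, β i = 0 := fun i => pow_eq_zero_iff two_ne_zero |>.mp <|
      (Finset.sum_eq_zero_iff_of_nonneg fun i _ => sq_nonneg (β i)).mp hs i (Finset.mem_univ i)
    simp [hβ]
  · field_simp
    ring

end Projection

section Reduction

variable {m n : ℕ} (A : Matrix (Fin m) (Fin n) ℝ) (b : Fin m → ℝ) (w : Fin n → ℝ)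

lemma mulVec_add_smul_ones_sub (c : ℝ) (k : Fin m) :
    A.mulVec (w + c • ones n) k - b k = (A.mulVec w k - b k) + c * rowSum A k := by
  simp only [Matrix.mulVec, dotProduct, Pi.add_apply, Pi.smul_apply, ones, smul_eq_mul,
    mul_one, mul_add, Finset.sum_add_distrib, rowSum, ← Finset.sum_mul]
  ring

lemma sum_rowSum_mul_mulVec (v : Fin n → ℝ) :
    ∑ i, rowSum A i * A.mulVec v i = ∑ j, (∑ i, rowSum A i * A i j) * v j := by
  simp only [Matrix.mulVec, dotProduct, Finset.mul_sum, Finset.sum_mul]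
  rw [Finset.sum_comm]
  exact Finset.sum_congr rfl fun j _ => Finset.sum_congr rfl fun i _ => by ring

lemma Aprime_mulVec (k : Fin m) :
    (Aprime A).mulVec w k = A.mulVec w k -
      rowSum A k * (∑ i, rowSum A i * A.mulVec w i) / (∑ i, (rowSum A i) ^ 2) := by
  rw [sum_rowSum_mul_mulVec, Finset.mul_sum, Finset.sum_div]
  simp only [Aprime, Matrix.mulVec, dotProduct, Matrix.of_apply, sub_mul, Finset.sum_sub_distrib]
  congr 1
  exact Finset.sum_congr rfl fun j _ => by ring

lemma Aprime_mulVec_sub_bprime (k : Fin m) :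
    (Aprime A).mulVec w k - bprime A b k =
      (A.mulVec w k - b k) -
        (∑ i, rowSum A i * (A.mulVec w i - b i)) / (∑ i, (rowSum A i) ^ 2) * rowSum A k := by
  simp only [Aprime_mulVec, bprime, mul_sub, Finset.sum_sub_distrib]
  ring

lemma muOf_eq_neg_div :
    muOf A b w =
      -((∑ i, rowSum A i * (A.mulVec w i - b i)) / (∑ i, (rowSum A i) ^ 2)) := by
  simp only [muOf, Matrix.mulVec, dotProduct, mul_sub, Finset.sum_sub_distrib]
  ring

lemma sum_sq_mulVec_add_smul_ones_sub (c : ℝ) :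
    ∑ k, (A.mulVec (w + c • ones n) k - b k) ^ 2 =
      ∑ k, ((Aprime A).mulVec w k - bprime A b k) ^ 2 +
        (∑ i, (rowSum A i) ^ 2) * (c - muOf A b w) ^ 2 := by
  simp only [mulVec_add_smul_ones_sub, Aprime_mulVec_sub_bprime, muOf_eq_neg_div, sub_neg_eq_add]
  exact sum_sq_add_mul_eq_proj (rowSum A) (fun k => A.mulVec w k - b k) c

end Reduction

theorem inverse_potts_from_sparsity_general (m n : ℕ)
    (A : Matrix (Fin m) (Fin n) ℝ) (b : Fin m → ℝ) (γ : ℝ)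
    (gplus : (Fin (n - 1) → ℝ) → (Fin n → ℝ))
    (hgplusInv : ∀ u : Fin (n - 1) → ℝ, diffOp (gplus u) = u)
    (ustar : Fin (n - 1) → ℝ)
    (hmin : ∀ u : Fin (n - 1) → ℝ,
      γ * (l0 ustar : ℝ) + ∑ i, ((Aprime A).mulVec (gplus ustar) i - bprime A b i) ^ 2 ≤
        γ * (l0 u : ℝ) + ∑ i, ((Aprime A).mulVec (gplus u) i - bprime A b i) ^ 2) :
    ∀ x : Fin n → ℝ,
      γ * (nJumps (gplus ustar + muOf A b (gplus ustar) • ones n) : ℝ) +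
          ∑ i, (A.mulVec (gplus ustar + muOf A b (gplus ustar) • ones n) i - b i) ^ 2 ≤
        γ * (nJumps x : ℝ) + ∑ i, (A.mulVec x i - b i) ^ 2 := by
  intro x
  set u := diffOp x
  obtain ⟨c, hx⟩ : ∃ c : ℝ, x = gplus u + c • ones n :=
    exists_eq_add_smul_ones_of_diffOp_eq (hgplusInv u).symm
  have hs : 0 ≤ ∑ i, (rowSum A i) ^ 2 := Finset.sum_nonneg fun i _ => sq_nonneg _
  calc _ = γ * (l0 ustar : ℝ) + ∑ i, ((Aprime A).mulVec (gplus ustar) i - bprime A b i) ^ 2 := by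
        rw [nJumps_eq_l0_diffOp, diffOp_add_smul_ones, hgplusInv,
          sum_sq_mulVec_add_smul_ones_sub, sub_self]
        ring
    _ ≤ γ * (l0 u : ℝ) + ∑ i, ((Aprime A).mulVec (gplus u) i - bprime A b i) ^ 2 := hmin u
    _ ≤ γ * (l0 u : ℝ) + (∑ i, ((Aprime A).mulVec (gplus u) i - bprime A b i) ^ 2 +
          (∑ i, (rowSum A i) ^ 2) * (c - muOf A b (gplus u)) ^ 2) := by
        gcongr
        exact le_add_of_nonneg_right (mul_nonneg hs (sq_nonneg _))
    _ = γ * (nJumps x : ℝ) + ∑ i, (A.mulVec x i - b i) ^ 2 := by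
        rw [← sum_sq_mulVec_add_smul_ones_sub, ← hx, nJumps_eq_l0_diffOp]

/-- If `u*` minimizes the sparsity functional `γ‖u‖₀ + ‖A′∇⁺u − b′‖₂²` over
`ℝ^{n−1}`, then `x* = ∇⁺u* + μ(∇⁺u*)·e` minimizes the inverse Potts functional
`P_γ(x) = γ‖∇x‖₀ + ‖Ax − b‖₂²` over `ℝⁿ`.  Here `∇⁺` is the inverse of the
finite difference operator restricted to the zero-mean subspace `V`,
characterized by `∑ᵢ (∇⁺u)ᵢ = 0` and `∇(∇⁺u) = u`. -/
theorem inverse_potts_from_sparsity (m n : ℕ) (hn : 2 ≤ n)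
    (A : Matrix (Fin m) (Fin n) ℝ) (b : Fin m → ℝ) (γ : ℝ) (hγ : 0 < γ)
    (hA : ∑ i, (rowSum A i) ^ 2 ≠ 0)
    (gplus : (Fin (n - 1) → ℝ) → (Fin n → ℝ))
    (hgplusV : ∀ u : Fin (n - 1) → ℝ, ∑ i, gplus u i = 0)
    (hgplusInv : ∀ u : Fin (n - 1) → ℝ, diffOp (gplus u) = u)
    (ustar : Fin (n - 1) → ℝ)
    (hmin : ∀ u : Fin (n - 1) → ℝ,
      γ * (l0 ustar : ℝ) + ∑ i, ((Aprime A).mulVec (gplus ustar) i - bprime A b i) ^ 2 ≤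
        γ * (l0 u : ℝ) + ∑ i, ((Aprime A).mulVec (gplus u) i - bprime A b i) ^ 2) :
    ∀ x : Fin n → ℝ,
      γ * (nJumps (gplus ustar + muOf A b (gplus ustar) • ones n) : ℝ) +
          ∑ i, (A.mulVec (gplus ustar + muOf A b (gplus ustar) • ones n) i - b i) ^ 2 ≤
        γ * (nJumps x : ℝ) + ∑ i, (A.mulVec x i - b i) ^ 2 :=
  inverse_potts_from_sparsity_general m n A b γ gplus hgplusInv ustar hmin
end
end

section
/- Let A be an m×n real matrix, b ∈ ℝ^m, p ≥ 1, γ > 0, and let (μ_k)_{k≥0} be a nondecreasing sequence of positive reals with ∑_k 1/√μ_k < ∞. Let (u^k), (v^k), (λ^k) be sequences in ℝ^n satisfying for all k: u^{k+1} minimizes w ↦ γ‖∇w‖₀ + (μ_k/2)‖w − (v^k − λ^k/μ_k)‖₂²; v^{k+1} minimizes w ↦ ‖Aw − b‖_p^p + (μ_k/2)‖w − (u^{k+1} + λ^k/μ_k)‖₂²; and λ^{k+1} = λ^k + μ_k(u^{k+1} − v^{k+1}). Then the sequence (‖A v^k − b‖_p)_k is bounded. -/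
open Filter Topology
open scoped BigOperators

noncomputable section

lemma nJumps_le {n : ℕ} (x : Fin n → ℝ) : nJumps x ≤ n := by
  have h1 : (jumpSet x).ncard ≤ (Set.univ : Set (Fin n)).ncard :=
    Set.ncard_le_ncard (Set.subset_univ _) Set.finite_univ
  simpa [Set.ncard_univ, nJumps] using h1

/-- Along the iPotts ADMM iteration, the sequence `(‖A v^k − b‖_p)_k` is
bounded. -/
theorem admm_residuals_bounded (n m : ℕ)
    (A : Matrix (Fin m) (Fin n) ℝ) (b : Fin m → ℝ)
    (p γ : ℝ) (hp : 1 ≤ p) (hγ : 0 < γ)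
    (μ : ℕ → ℝ) (hμpos : ∀ k, 0 < μ k) (hμmono : Monotone μ)
    (hμsum : Summable fun k => 1 / Real.sqrt (μ k))
    (u v lam : ℕ → Fin n → ℝ)
    (hu : ∀ k : ℕ, ∀ w : Fin n → ℝ,
      γ * (nJumps (u (k + 1)) : ℝ) +
          μ k / 2 * ∑ i, (u (k + 1) i - (v k i - lam k i / μ k)) ^ 2 ≤
        γ * (nJumps w : ℝ) + μ k / 2 * ∑ i, (w i - (v k i - lam k i / μ k)) ^ 2)
    (hv : ∀ k : ℕ, ∀ w : Fin n → ℝ,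
      (∑ i, |A.mulVec (v (k + 1)) i - b i| ^ p) +
          μ k / 2 * ∑ i, (v (k + 1) i - (u (k + 1) i + lam k i / μ k)) ^ 2 ≤
        (∑ i, |A.mulVec w i - b i| ^ p) +
          μ k / 2 * ∑ i, (w i - (u (k + 1) i + lam k i / μ k)) ^ 2)
    (hlam : ∀ k : ℕ, lam (k + 1) = lam k + μ k • (u (k + 1) - v (k + 1))) :
    ∃ C : ℝ, ∀ k : ℕ, (∑ i, |A.mulVec (v k) i - b i| ^ p) ^ (1 / p) ≤ C := by
  have hp0 : (0:ℝ) < p := lt_of_lt_of_le one_pos hp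
  set K : ℝ := ∑ i, ∑ j, |A i j| with hKdef
  have hK0 : 0 ≤ K := Finset.sum_nonneg fun i _ =>
    Finset.sum_nonneg fun j _ => abs_nonneg _
  set c : ℝ := ((m : ℝ) + 1) * K * Real.sqrt (2 * γ * n) with hcdef
  have hc0 : 0 ≤ c := by positivity
  set g : ℕ → ℝ := fun k => (∑ i, |A.mulVec (v k) i - b i| ^ p) ^ (1/p) with hgdef
  -- key one-step inequality
  have key : ∀ k, g (k+1) ≤ g k + c / Real.sqrt (μ k) := by
    intro k
    have hμk := hμpos k
    set e : Fin n → ℝ := fun i => u (k+1) i - v k i + lam k i / μ k with hedef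
    set r : ℝ := Real.sqrt (2 * γ * n) / Real.sqrt (μ k) with hrdef
    have hr0 : 0 ≤ r := by positivity
    -- bound on e from the u-step
    have hesum : ∑ i, (e i)^2 ≤ 2 * γ * n / μ k := by
      have h1 := hu k (fun i => v k i - lam k i / μ k)
      beta_reduce at h1
      have h2 : (∑ i : Fin n, ((v k i - lam k i / μ k) - (v k i - lam k i / μ k)) ^ 2)
          = 0 := by simp
      have h5 : ∑ i, (u (k+1) i - (v k i - lam k i / μ k)) ^ 2 = ∑ i, (e i)^2 := by
        refine Finset.sum_congr rfl fun i _ => ?_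
        simp only [hedef]; ring
      rw [h2, h5] at h1
      have h3 : (nJumps (fun i => v k i - lam k i / μ k) : ℝ) ≤ n := by
        exact_mod_cast nJumps_le _
      have h4 : (0:ℝ) ≤ (nJumps (u (k+1)) : ℝ) := Nat.cast_nonneg _
      have h6 : μ k / 2 * ∑ i, (e i)^2 ≤ γ * n := by
        nlinarith [mul_le_mul_of_nonneg_left h3 hγ.le, mul_nonneg hγ.le h4]
      rw [le_div_iff₀ hμk]
      nlinarith
    have hei : ∀ j, |e j| ≤ r := by
      intro j
      have h1 : (e j)^2 ≤ 2 * γ * n / μ k :=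
        le_trans (Finset.single_le_sum (fun i _ => sq_nonneg (e i))
          (Finset.mem_univ j)) hesum
      have h2 : |e j| = Real.sqrt ((e j)^2) := (Real.sqrt_sq_eq_abs _).symm
      rw [h2, hrdef, ← Real.sqrt_div (by positivity : (0:ℝ) ≤ 2 * γ * n)]
      exact Real.sqrt_le_sqrt h1
    -- bound on the p-norm of A e
    have hAe : ∀ i, |A.mulVec e i| ≤ K * r := by
      intro i
      have h1 : A.mulVec e i = ∑ j, A i j * e j := rfl
      calc |A.mulVec e i| = |∑ j, A i j * e j| := by rw [h1]
        _ ≤ ∑ j, |A i j * e j| := Finset.abs_sum_le_sum_abs _ _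
        _ = ∑ j, |A i j| * |e j| := by simp [abs_mul]
        _ ≤ ∑ j, |A i j| * r := Finset.sum_le_sum fun j _ =>
            mul_le_mul_of_nonneg_left (hei j) (abs_nonneg _)
        _ = (∑ j, |A i j|) * r := (Finset.sum_mul _ _ _).symm
        _ ≤ K * r := by
            refine mul_le_mul_of_nonneg_right ?_ hr0
            exact Finset.single_le_sum
              (f := fun i => ∑ j, |A i j|)
              (fun i _ => Finset.sum_nonneg fun j _ => abs_nonneg _)
              (Finset.mem_univ i)
    have hKr0 : 0 ≤ K * r := mul_nonneg hK0 hr0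
    have hAenorm : (∑ i, |A.mulVec e i| ^ p) ^ (1/p) ≤ ((m:ℝ) + 1) * (K * r) := by
      have h1 : (∑ i, |A.mulVec e i| ^ p) ≤ (m : ℝ) * (K * r) ^ p := by
        calc (∑ i, |A.mulVec e i| ^ p) ≤ ∑ _i : Fin m, (K * r) ^ p :=
              Finset.sum_le_sum fun i _ =>
                Real.rpow_le_rpow (abs_nonneg _) (hAe i) hp0.le
          _ = (m : ℝ) * (K * r) ^ p := by
              simp [Finset.sum_const, Finset.card_univ, nsmul_eq_mul]
      have h2 : (∑ i, |A.mulVec e i| ^ p) ^ (1/p) ≤ ((m:ℝ) * (K * r) ^ p) ^ (1/p) :=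
        Real.rpow_le_rpow
          (Finset.sum_nonneg fun i _ => Real.rpow_nonneg (abs_nonneg _) _) h1
          (by positivity)
      have h3 : ((m:ℝ) * (K * r) ^ p) ^ (1/p) = (m:ℝ) ^ (1/p) * (K * r) := by
        rw [Real.mul_rpow (Nat.cast_nonneg m) (Real.rpow_nonneg hKr0 _),
          ← Real.rpow_mul hKr0, mul_one_div, div_self hp0.ne', Real.rpow_one]
      have h4 : (m:ℝ) ^ (1/p) ≤ (m:ℝ) + 1 := by
        rcases Nat.eq_zero_or_pos m with hm | hm
        · subst hm
          rw [Nat.cast_zero, Real.zero_rpow (one_div_ne_zero hp0.ne')]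
          norm_num
        · have hm1 : (1:ℝ) ≤ (m:ℝ) := by exact_mod_cast hm
          calc (m:ℝ) ^ (1/p) ≤ (m:ℝ) ^ (1:ℝ) :=
                Real.rpow_le_rpow_of_exponent_le hm1
                  (by rw [div_le_one hp0]; exact hp)
            _ = (m:ℝ) := Real.rpow_one _
            _ ≤ (m:ℝ) + 1 := by linarith
      calc (∑ i, |A.mulVec e i| ^ p) ^ (1/p) ≤ (m:ℝ) ^ (1/p) * (K * r) := by
            rw [← h3]; exact h2
        _ ≤ ((m:ℝ) + 1) * (K * r) := mul_le_mul_of_nonneg_right h4 hKr0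
    -- v-step comparison
    have hF : (∑ i, |A.mulVec (v (k+1)) i - b i| ^ p) ≤
        ∑ i, |A.mulVec (v k + e) i - b i| ^ p := by
      have h1 := hv k (v k + e)
      have h2 : (∑ i : Fin n, ((v k + e) i - (u (k+1) i + lam k i / μ k)) ^ 2) = 0 := by
        refine Finset.sum_eq_zero fun i _ => ?_
        have : (v k + e) i - (u (k+1) i + lam k i / μ k) = 0 := by
          simp only [Pi.add_apply, hedef]; ring
        rw [this]; ring
      rw [h2] at h1
      have h3 : 0 ≤ μ k / 2 *
          ∑ i, (v (k+1) i - (u (k+1) i + lam k i / μ k)) ^ 2 := by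
        have := Finset.sum_nonneg
          (fun i (_ : i ∈ Finset.univ) =>
            sq_nonneg (v (k+1) i - (u (k+1) i + lam k i / μ k)))
        positivity
      linarith
    -- Minkowski
    have hsplit : ∀ i, A.mulVec (v k + e) i - b i =
        (A.mulVec (v k) i - b i) + A.mulVec e i := by
      intro i
      rw [Matrix.mulVec_add]
      simp only [Pi.add_apply]
      ring
    have hmink : (∑ i, |A.mulVec (v k + e) i - b i| ^ p) ^ (1/p) ≤
        g k + (∑ i, |A.mulVec e i| ^ p) ^ (1/p) := by
      have h1 : (∑ i, |A.mulVec (v k + e) i - b i| ^ p) =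
          ∑ i, |(A.mulVec (v k) i - b i) + A.mulVec e i| ^ p := by
        refine Finset.sum_congr rfl fun i _ => by rw [hsplit i]
      rw [h1, hgdef]
      exact Real.Lp_add_le Finset.univ _ _ hp
    have hstep : g (k+1) ≤ g k + ((m:ℝ) + 1) * (K * r) := by
      have h1 : g (k+1) ≤ (∑ i, |A.mulVec (v k + e) i - b i| ^ p) ^ (1/p) :=
        Real.rpow_le_rpow
          (Finset.sum_nonneg fun i _ => Real.rpow_nonneg (abs_nonneg _) _) hF
          (by positivity)
      calc g (k+1) ≤ (∑ i, |A.mulVec (v k + e) i - b i| ^ p) ^ (1/p) := h1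
        _ ≤ g k + (∑ i, |A.mulVec e i| ^ p) ^ (1/p) := hmink
        _ ≤ g k + ((m:ℝ) + 1) * (K * r) := by linarith [hAenorm]
    have hcr : c / Real.sqrt (μ k) = ((m:ℝ) + 1) * (K * r) := by
      rw [hcdef, hrdef]; ring
    rw [hcr]
    exact hstep
  -- conclude by summation
  set S : ℝ := ∑' j, 1 / Real.sqrt (μ j) with hSdef
  refine ⟨g 0 + c * S, fun k => ?_⟩
  have hbound : ∀ k, g k ≤ g 0 + c * ∑ j ∈ Finset.range k, 1 / Real.sqrt (μ j) := by
    intro k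
    induction k with
    | zero => simp
    | succ k ih =>
        have h1 : c / Real.sqrt (μ k) = c * (1 / Real.sqrt (μ k)) := by ring
        calc g (k+1) ≤ g k + c / Real.sqrt (μ k) := key k
          _ ≤ g 0 + c * ∑ j ∈ Finset.range k, 1 / Real.sqrt (μ j) +
              c * (1 / Real.sqrt (μ k)) := by rw [← h1] at *; linarith
          _ = g 0 + c * ∑ j ∈ Finset.range (k+1), 1 / Real.sqrt (μ j) := by
              rw [Finset.sum_range_succ]; ring
  have hpart : ∑ j ∈ Finset.range k, 1 / Real.sqrt (μ j) ≤ S :=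
    Summable.sum_le_tsum (Finset.range k)
      (fun i _ => by positivity) hμsum
  have h2 : g k ≤ g 0 + c * S :=
    le_trans (hbound k) (by nlinarith [mul_le_mul_of_nonneg_left hpart hc0])
  exact h2
end
end
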